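/- At the hanging equilibrium (q,ω) = (e₃, 0) with q_d = e₃ and k_q = k_ω = 1, every eigenvalue of the restriction of the linearization matrix A to the invariant subspace span{e₁,e₂,e₄,e₅} has real part -1/2 < 0; specifically the eigenvalues are (-1 ± √3 i)/2, each with multiplicity 2. -/
import Mathlib


open Matrix

/-- The hat map: `hat x` is the skew-symmetric matrix with `(hat x).mulVec y = x × y`. -/
def hat (x : Fin 3 → ℝ) : Matrix (Fin 3) (Fin 3) ℝ :=
  !![0, -x 2, x 1; x 2, 0, -x 0; -x 1, x 0, 0]

/-- The linearization matrix `A = [[q qᵀ ω̂, I - q qᵀ], [k_q q̂_d q̂, -k_ω I]]` of the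
closed-loop spherical pendulum at the hanging equilibrium `q = q_d = e₃`, `ω = 0`, with
`k_q = k_ω = 1`, complexified. -/
noncomputable def Ahang : Matrix (Fin 3 ⊕ Fin 3) (Fin 3 ⊕ Fin 3) ℂ :=
  (fromBlocks
    (vecMulVec (Pi.single 2 1) (Pi.single 2 1) * hat 0)
    ((1 : Matrix (Fin 3) (Fin 3) ℝ) - vecMulVec (Pi.single 2 1) (Pi.single 2 1))
    ((1 : ℝ) • (hat (Pi.single 2 1) * hat (Pi.single 2 1)))
    (-((1 : ℝ) • (1 : Matrix (Fin 3) (Fin 3) ℝ)))).map (Complex.ofReal)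

/-- The invariant subspace `span{e₁, e₂, e₄, e₅} ⊂ ℂ⁶` (indices `inl 0, inl 1, inr 0, inr 1`). -/
noncomputable def invSubspace : Submodule ℂ (Fin 3 ⊕ Fin 3 → ℂ) :=
  Submodule.span ℂ
    {Pi.single (Sum.inl 0) 1, Pi.single (Sum.inl 1) 1,
     Pi.single (Sum.inr 0) 1, Pi.single (Sum.inr 1) 1}


section AuxLemmas
open Sum

lemma Ahang_mulVec (v : Fin 3 ⊕ Fin 3 → ℂ) :
    Ahang.mulVec v = Sum.elim ![v (inr 0), v (inr 1), 0]
      ![-v (inl 0) - v (inr 0), -v (inl 1) - v (inr 1), -v (inr 2)] := by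
  funext k
  rcases k with i | i <;> fin_cases i <;>
    simp [Ahang, mulVec, dotProduct, Fintype.sum_sum_type, Fin.sum_univ_succ,
      fromBlocks, hat, vecMulVec, Matrix.mul_apply, Pi.single_apply, Matrix.one_apply] <;> ring

lemma mem_invSubspace (v : Fin 3 ⊕ Fin 3 → ℂ) :
    v ∈ invSubspace ↔ v (inl 2) = 0 ∧ v (inr 2) = 0 := by
  constructor
  · intro hv
    have : invSubspace ≤ LinearMap.ker (LinearMap.proj (R := ℂ) (φ := fun _ : Fin 3 ⊕ Fin 3 => ℂ) (inl 2)) ⊓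
        LinearMap.ker (LinearMap.proj (R := ℂ) (φ := fun _ : Fin 3 ⊕ Fin 3 => ℂ) (inr 2)) := by
      rw [invSubspace, Submodule.span_le]
      rintro x (rfl | rfl | rfl | rfl) <;>
        simp [LinearMap.mem_ker, Pi.single_apply]
    exact this hv
  · rintro ⟨h1, h2⟩
    have hv : v = v (inl 0) • (Pi.single (inl 0) 1 : Fin 3 ⊕ Fin 3 → ℂ)
        + v (inl 1) • (Pi.single (inl 1) 1 : Fin 3 ⊕ Fin 3 → ℂ)
        + v (inr 0) • (Pi.single (inr 0) 1 : Fin 3 ⊕ Fin 3 → ℂ)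
        + v (inr 1) • (Pi.single (inr 1) 1 : Fin 3 ⊕ Fin 3 → ℂ) := by
      funext k
      rcases k with i | i <;> fin_cases i <;> simp [Pi.single_apply, h1, h2]
    rw [hv]
    apply Submodule.add_mem _ (Submodule.add_mem _ (Submodule.add_mem _ _ _) _) _ <;>
      exact Submodule.smul_mem _ _ (Submodule.subset_span (by simp [invSubspace]))

lemma root_char (μ : ℂ) : μ ^ 2 + μ + 1 = 0 ↔
    μ = (-1 + Real.sqrt 3 * Complex.I) / 2 ∨ μ = (-1 - Real.sqrt 3 * Complex.I) / 2 := by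
  have h3 : (Real.sqrt 3 : ℂ) ^ 2 = 3 := by
    norm_cast; rw [Real.sq_sqrt] <;> norm_num
  have hI : Complex.I ^ 2 = -1 := Complex.I_sq
  have key : μ ^ 2 + μ + 1 =
      (μ - (-1 + Real.sqrt 3 * Complex.I) / 2) * (μ - (-1 - Real.sqrt 3 * Complex.I) / 2) := by
    linear_combination (Complex.I ^ 2 / 4 : ℂ) * h3 + (3 / 4 : ℂ) * hI
  rw [key, mul_eq_zero, sub_eq_zero, sub_eq_zero]

/-- explicit eigenvectors -/
noncomputable def bv (μ : ℂ) (i : Fin 2) : Fin 3 ⊕ Fin 3 → ℂ :=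
  (Pi.single (inl (![0, 1] i)) 1 : Fin 3 ⊕ Fin 3 → ℂ)
    + μ • (Pi.single (inr (![0, 1] i)) 1 : Fin 3 ⊕ Fin 3 → ℂ)

lemma bv_eig (μ : ℂ) (hμ : μ ^ 2 + μ + 1 = 0) (i : Fin 2) :
    Ahang.mulVec (bv μ i) = μ • bv μ i := by
  rw [Ahang_mulVec]
  funext k
  rcases k with j | j <;> fin_cases j <;> fin_cases i <;>
      simp [bv, Pi.single_apply] <;> linear_combination -hμ

lemma bv_mem (μ : ℂ) (i : Fin 2) : bv μ i ∈ invSubspace := by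
  rw [mem_invSubspace]
  fin_cases i <;> simp [bv, Pi.single_apply]

lemma bv_ne (μ : ℂ) (i : Fin 2) : bv μ i ≠ 0 := by
  intro h
  have := congrFun h (inl (![0, 1] i))
  fin_cases i <;> simp [bv, Pi.single_apply] at this

lemma eigExistsIff (μ : ℂ) :
    (∃ v ∈ invSubspace, v ≠ 0 ∧ Ahang.mulVec v = μ • v) ↔ μ ^ 2 + μ + 1 = 0 := by
  constructor
  · rintro ⟨v, hvmem, hv0, hv⟩
    rw [mem_invSubspace] at hvmem
    obtain ⟨h1, h2⟩ := hvmem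
    rw [Ahang_mulVec] at hv
    have e1 := congrFun hv (inl 0)
    have e2 := congrFun hv (inl 1)
    have e4 := congrFun hv (inr 0)
    have e5 := congrFun hv (inr 1)
    simp [Pi.smul_apply] at e1 e2 e4 e5
    have k0 : (μ ^ 2 + μ + 1) * v (inl 0) = 0 := by linear_combination -e4 - (1 + μ) * e1
    have k1 : (μ ^ 2 + μ + 1) * v (inl 1) = 0 := by linear_combination -e5 - (1 + μ) * e2
    by_contra hne
    have hx0 : v (inl 0) = 0 := by
      rcases mul_eq_zero.1 k0 with h | h
      · exact absurd h hne
      · exact h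
    have hx1 : v (inl 1) = 0 := by
      rcases mul_eq_zero.1 k1 with h | h
      · exact absurd h hne
      · exact h
    apply hv0
    funext k
    rcases k with j | j <;> fin_cases j <;>
      simp [h1, h2, hx0, hx1] <;>
      first
        | linear_combination e1 + μ * hx0
        | linear_combination e2 + μ * hx1
  · intro hμ
    exact ⟨bv μ 0, bv_mem μ 0, bv_ne μ 0, bv_eig μ hμ 0⟩

lemma eig_inter_eq (μ : ℂ) (hμ : μ ^ 2 + μ + 1 = 0) :
    Module.End.eigenspace Ahang.mulVecLin μ ⊓ invSubspace
      = Submodule.span ℂ (Set.range (bv μ)) := by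
  apply le_antisymm
  · rintro v ⟨hve, hvm⟩
    rw [SetLike.mem_coe, Module.End.mem_eigenspace_iff, mulVecLin_apply] at hve
    rw [SetLike.mem_coe, mem_invSubspace] at hvm
    obtain ⟨h1, h2⟩ := hvm
    rw [Ahang_mulVec] at hve
    have e1 := congrFun hve (inl 0)
    have e2 := congrFun hve (inl 1)
    simp [Pi.smul_apply] at e1 e2
    have hv : v = v (inl 0) • bv μ 0 + v (inl 1) • bv μ 1 := by
      funext k
      rcases k with j | j <;> fin_cases j <;>
        simp [bv, Pi.single_apply, h1, h2] <;>
        first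
          | linear_combination e1
          | linear_combination e2
    rw [hv]
    exact Submodule.add_mem _
      (Submodule.smul_mem _ _ (Submodule.subset_span ⟨0, rfl⟩))
      (Submodule.smul_mem _ _ (Submodule.subset_span ⟨1, rfl⟩))
  · rw [Submodule.span_le]
    rintro x ⟨i, rfl⟩
    refine ⟨?_, bv_mem μ i⟩
    rw [SetLike.mem_coe, Module.End.mem_eigenspace_iff, mulVecLin_apply]
    exact bv_eig μ hμ i

lemma bv_li (μ : ℂ) : LinearIndependent ℂ (bv μ) := by
  have : bv μ = ![bv μ 0, bv μ 1] := by
    funext i; fin_cases i <;> rfl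
  rw [this, linearIndependent_fin2]
  constructor
  · exact bv_ne μ 1
  · intro a h
    have := congrFun h (inl 0)
    simp [bv, Pi.single_apply] at this

lemma finrank_eig (μ : ℂ) (hμ : μ ^ 2 + μ + 1 = 0) :
    Module.finrank ℂ ↥(Module.End.eigenspace Ahang.mulVecLin μ ⊓ invSubspace) = 2 := by
  rw [eig_inter_eq μ hμ, finrank_span_eq_card (bv_li μ)]
  simp

lemma root_re (μ : ℂ)
    (h : μ = (-1 + Real.sqrt 3 * Complex.I) / 2 ∨ μ = (-1 - Real.sqrt 3 * Complex.I) / 2) :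
    μ.re = -(1 / 2) := by
  rcases h with rfl | rfl <;> simp [Complex.div_re, Complex.normSq] <;> norm_num

end AuxLemmas

/-- At the hanging equilibrium, the eigenvalues of the restriction of the linearization
to `span{e₁,e₂,e₄,e₅}` are `(-1 ± √3 i)/2`, each of multiplicity 2; in particular every
such eigenvalue has real part `-1/2 < 0`. -/
theorem hanging_equilibrium_stable_eigenvalues :
    (∀ μ : ℂ, (∃ v ∈ invSubspace, v ≠ 0 ∧ Ahang.mulVec v = μ • v) ↔
      (μ = (-1 + Real.sqrt 3 * Complex.I) / 2 ∨ μ = (-1 - Real.sqrt 3 * Complex.I) / 2)) ∧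
    (∀ μ : ℂ, (∃ v ∈ invSubspace, v ≠ 0 ∧ Ahang.mulVec v = μ • v) → μ.re = -(1 / 2)) ∧
    Module.finrank ℂ
      ↥(Module.End.eigenspace Ahang.mulVecLin ((-1 + Real.sqrt 3 * Complex.I) / 2)
        ⊓ invSubspace) = 2 ∧
    Module.finrank ℂ
      ↥(Module.End.eigenspace Ahang.mulVecLin ((-1 - Real.sqrt 3 * Complex.I) / 2)
        ⊓ invSubspace) = 2 := by
  refine ⟨fun μ => ?_, fun μ h => ?_, ?_, ?_⟩
  · rw [eigExistsIff, root_char]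
  · exact root_re μ ((root_char μ).mp ((eigExistsIff μ).mp h))
  · exact finrank_eig _ ((root_char _).mpr (Or.inl rfl))
  · exact finrank_eig _ ((root_char _).mpr (Or.inr rfl))
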